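/- arXiv:0710.2678 — 2 statements merged into one kernel-verified Lean document; each statement's English description precedes it below -/
import Mathlib

section
/- If the adaptive directional subdivision scheme with masks a₀, a₁ converges in C(ℝ²), then for every ε = (ε₁,ε₂,…) ∈ E_∞ the limit functions satisfy the refinement equation f_ε = Σ_{α∈ℤ²} a_{ε₁}(α) · f_{ε̂}(W_{ε₁} · − α), where ε̂ := (ε₂,ε₃,…) is the shifted sequence. -/
/-- Bi-infinite two-dimensional integer index set `ℤ²`. -/
abbrev Z2 : Type := Fin 2 → ℤ

/-- The scaling matrix `W₀` with rows `(4,0)` and `(0,2)`. -/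
def W0 : Matrix (Fin 2) (Fin 2) ℤ := !![4, 0; 0, 2]

/-- The scaling matrix `W₁` with rows `(4,-4)` and `(0,2)`. -/
def W1 : Matrix (Fin 2) (Fin 2) ℤ := !![4, -4; 0, 2]

/-- `W_η` for `η ∈ {0,1}`. -/
def Wsel : Fin 2 → Matrix (Fin 2) (Fin 2) ℤ := ![W0, W1]

/-- A sequence `c : ℤ² → ℝ` is bounded. -/
def Bdd (c : Z2 → ℝ) : Prop := ∃ K : ℝ, ∀ α, |c α| ≤ K

/-- The subdivision operator `S_{a,W} c = Σ_α a(· − Wα) c(α)`. -/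
noncomputable def subd (a : Z2 → ℝ) (W : Matrix (Fin 2) (Fin 2) ℤ) (c : Z2 → ℝ) : Z2 → ℝ :=
  fun β => ∑' α : Z2, a (β - W.mulVec α) * c α

/-- The Dirac sequence `δ` on `ℤ²`. -/
noncomputable def delta : Z2 → ℝ := fun α => if α = 0 then 1 else 0

/-- The iterated scheme `S_ε = S_{ε_n} ⋯ S_{ε_1}` applied to `c`, for
`ε = [ε₁, …, ε_n]` (the head `ε₁` is applied first). -/
noncomputable def Ssub (a : Fin 2 → Z2 → ℝ) : List (Fin 2) → (Z2 → ℝ) → (Z2 → ℝ)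
  | [], c => c
  | η :: rest, c => Ssub a rest (subd (a η) (Wsel η) c)

/-- `W_ε = W_{ε_n} ⋯ W_{ε_1}` for `ε = [ε₁, …, ε_n]`. -/
def WprodL : List (Fin 2) → Matrix (Fin 2) (Fin 2) ℤ
  | [] => 1
  | η :: rest => WprodL rest * Wsel η

/-- `W_ε` viewed as a real matrix. -/
noncomputable def WR (ε : List (Fin 2)) : Matrix (Fin 2) (Fin 2) ℝ :=
  (WprodL ε).map (Int.cast : ℤ → ℝ)

/-- The initial segment `P_n ε = (ε₁, …, ε_n)` of `ε ∈ E_∞ = {0,1}^ℕ`. -/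
def Pn (ε : ℕ → Fin 2) (n : ℕ) : List (Fin 2) := List.ofFn (fun i : Fin n => ε i)

/-- Cast of an integer vector to `ℝ²`. -/
noncomputable def castV (α : Z2) : Fin 2 → ℝ := fun i => (α i : ℝ)

/-- The adaptive directional subdivision scheme with masks `a₀, a₁` converges in
`C(ℝ²)`: for every `ε ∈ E_∞` there is a nonzero, uniformly continuous `f_ε`
with `lim_{n→∞} sup_{α∈ℤ²} |f_ε(W_{P_nε}⁻¹ α) − S_{P_nε} δ (α)| = 0`. -/
def SchemeConverges (a : Fin 2 → Z2 → ℝ) : Prop :=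
  ∀ ε : ℕ → Fin 2, ∃ f : (Fin 2 → ℝ) → ℝ, f ≠ 0 ∧ UniformContinuous f ∧
    ∀ η : ℝ, 0 < η → ∃ N : ℕ, ∀ n ≥ N, ∀ α : Z2,
      |f ((WR (Pn ε n))⁻¹.mulVec (castV α)) - Ssub a (Pn ε n) delta α| < η

/-! Since `S_{η :: L} δ = S_L a_η` and the mask is a finite combination
`a_η = Σ_α a_η(α) δ(· - α)`, linearity and shift covariance of `S_L` give
`S_{ε₁ :: L} δ (β) = Σ_α a_{ε₁}(α) S_L δ(β - W_L α)`. Evaluate this with `L = P_n ε̂` at the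
lattice point `β_n` nearest to `W_{P_{n+1} ε} x`. Every `W_η` expands the sup norm by a factor
at least `4/3`, so `W_{P_{n+1} ε}⁻¹ β_n → x` and `W_{P_n ε̂}⁻¹ (β_n - W_{P_n ε̂} α) → W_{ε₁} x - α`;
continuity of the limit functions and uniform convergence then send the left side to `f_ε(x)`
and the right side to `Σ_α a_{ε₁}(α) f_{ε̂}(W_{ε₁} x - α)`. -/

open Function Matrix Filter Topology

section Subdivision

variable (a : Z2 → ℝ) (W : Matrix (Fin 2) (Fin 2) ℤ)

lemma support_subd_finite {c : Z2 → ℝ} (ha : (support a).Finite) (hc : (support c).Finite) :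
    (support (subd a W c)).Finite := by
  refine (hc.biUnion fun γ _ => ha.image (· + W *ᵥ γ)).subset fun β hβ => ?_
  by_contra hβ'
  have hterm : ∀ γ, a (β - W *ᵥ γ) * c γ = 0 := fun γ => by
    by_contra h
    exact hβ' (Set.mem_biUnion (right_ne_zero_of_mul h)
      ⟨_, left_ne_zero_of_mul h, sub_add_cancel β _⟩)
  exact hβ (by simp only [subd, hterm, tsum_zero])

lemma subd_shift (c : Z2 → ℝ) (α β : Z2) :
    subd a W (fun γ => c (γ - α)) β = subd a W c (β - W *ᵥ α) := by
  rw [subd, ← (Equiv.addRight α).tsum_eq]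
  refine tsum_congr fun γ => ?_
  simp only [Equiv.coe_addRight, add_sub_cancel_right, mulVec_add, sub_add_eq_sub_sub_swap]

lemma subd_sum_smul {ι : Type*} (s : Finset ι) (w : ι → ℝ) (c : ι → Z2 → ℝ)
    (hc : ∀ i ∈ s, (support (c i)).Finite) (β : Z2) :
    subd a W (fun γ => ∑ i ∈ s, w i * c i γ) β = ∑ i ∈ s, w i * subd a W (c i) β := by
  have hsumm : ∀ i ∈ s, Summable fun γ => w i * (a (β - W *ᵥ γ) * c i γ) := fun i hi =>
    (summable_of_hasFiniteSupport <| (hc i hi).subset (support_mul_subset_right _ _)).mul_left _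
  simp only [subd, Finset.mul_sum, mul_left_comm _ (w _)]
  rw [Summable.tsum_finsetSum hsumm]
  simp only [tsum_mul_left]

lemma subd_delta : subd a W delta = a := by
  funext β
  rw [subd, tsum_eq_single 0 fun γ hγ => by simp [delta, hγ]]
  simp [delta]

end Subdivision

lemma eq_sum_mul_delta_sub (c : Z2 → ℝ) (s : Finset Z2) (hs : support c ⊆ s) :
    c = fun γ => ∑ α ∈ s, c α * delta (γ - α) := by
  funext γ
  simp only [delta, sub_eq_zero, mul_ite, mul_one, mul_zero, Finset.sum_ite_eq]
  split_ifs with hγ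
  · rfl
  · exact not_not.1 fun h => hγ (hs h)

lemma support_delta_finite : (support delta).Finite :=
  (Set.finite_singleton 0).subset fun γ hγ => by
    by_contra h
    exact hγ (if_neg h)

section Scheme

variable (a : Fin 2 → Z2 → ℝ) (ha : ∀ η, (support (a η)).Finite)
include ha

lemma Ssub_sum_smul_shift {ι : Type*} (s : Finset ι) (w : ι → ℝ) (L : List (Fin 2))
    (c : Z2 → ℝ) (t : ι → Z2) (hc : (support c).Finite) (β : Z2) :
    Ssub a L (fun γ => ∑ i ∈ s, w i * c (γ - t i)) β
      = ∑ i ∈ s, w i * Ssub a L c (β - WprodL L *ᵥ t i) := by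
  induction L generalizing c t β with
  | nil => simp [Ssub, WprodL]
  | cons η L ih =>
    have hstep : subd (a η) (Wsel η) (fun γ => ∑ i ∈ s, w i * c (γ - t i))
        = fun β => ∑ i ∈ s, w i * subd (a η) (Wsel η) c (β - Wsel η *ᵥ t i) := funext fun β => by
      rw [subd_sum_smul _ _ s w _ fun i _ => hc.preimage sub_left_injective.injOn]
      simp only [subd_shift]
    simp only [Ssub, WprodL, hstep, ih _ _ (support_subd_finite _ _ (ha η) hc), mulVec_mulVec]

lemma Ssub_cons_delta (b : Fin 2) (L : List (Fin 2)) (β : Z2) :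
    Ssub a (b :: L) delta β
      = ∑ α ∈ (ha b).toFinset, a b α * Ssub a L delta (β - WprodL L *ᵥ α) := by
  have h := Ssub_sum_smul_shift a ha (ha b).toFinset (a b) L delta id support_delta_finite β
  simp only [id] at h
  rw [← eq_sum_mul_delta_sub (a b) _ (by simp)] at h
  rw [Ssub, subd_delta, h]

end Scheme

lemma WR_cons (η : Fin 2) (L : List (Fin 2)) :
    WR (η :: L) = WR L * (Wsel η).map (Int.cast : ℤ → ℝ) :=
  Matrix.map_mul (f := Int.castRingHom ℝ)

lemma norm_le_mul_norm_Wsel_mulVec (η : Fin 2) (v : Fin 2 → ℝ) :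
    ‖v‖ ≤ 3 / 4 * ‖(Wsel η).map (Int.cast : ℤ → ℝ) *ᵥ v‖ := by
  set u := (Wsel η).map (Int.cast : ℤ → ℝ) *ᵥ v with hu
  have hu0 : |u 0| ≤ ‖u‖ := norm_le_pi_norm u 0
  have hu1 : |u 1| ≤ ‖u‖ := norm_le_pi_norm u 1
  refine (pi_norm_le_iff_of_nonneg (by positivity)).2 fun i => ?_
  rw [Real.norm_eq_abs, abs_le]
  rw [abs_le] at hu0 hu1
  fin_cases η <;> fin_cases i <;>
    simp [hu, Wsel, W0, W1] at hu0 hu1 ⊢ <;>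
    constructor <;> linarith

lemma norm_le_pow_mul_norm_WR_mulVec (L : List (Fin 2)) (v : Fin 2 → ℝ) :
    ‖v‖ ≤ (3 / 4) ^ L.length * ‖WR L *ᵥ v‖ := by
  induction L generalizing v with
  | nil => simp [WR, WprodL]
  | cons η L ih =>
    calc ‖v‖ ≤ 3 / 4 * ‖(Wsel η).map (Int.cast : ℤ → ℝ) *ᵥ v‖ := norm_le_mul_norm_Wsel_mulVec η v
      _ ≤ 3 / 4 * ((3 / 4) ^ L.length * ‖WR (η :: L) *ᵥ v‖) := by
        rw [WR_cons, ← mulVec_mulVec]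
        gcongr
        exact ih _
      _ = (3 / 4) ^ (η :: L).length * ‖WR (η :: L) *ᵥ v‖ := by
        rw [List.length_cons, pow_succ]
        ring

lemma det_WR_ne_zero (L : List (Fin 2)) : (WR L).det ≠ 0 := fun h => by
  obtain ⟨v, hv, hWv⟩ := exists_mulVec_eq_zero_iff.2 h
  have := norm_le_pow_mul_norm_WR_mulVec L v
  rw [hWv, norm_zero, mul_zero] at this
  exact hv (norm_le_zero_iff.1 this)

lemma norm_WR_inv_mulVec_sub_le (L : List (Fin 2)) (y x : Fin 2 → ℝ) :
    ‖(WR L)⁻¹ *ᵥ y - x‖ ≤ (3 / 4) ^ L.length * ‖y - WR L *ᵥ x‖ := by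
  have := norm_le_pow_mul_norm_WR_mulVec L ((WR L)⁻¹ *ᵥ y - x)
  rwa [mulVec_sub, mulVec_mulVec, mul_nonsing_inv _ (isUnit_iff_ne_zero.2 (det_WR_ne_zero L)),
    one_mulVec] at this

lemma castV_sub (α β : Z2) : castV (α - β) = castV α - castV β := by
  funext i
  simp [castV]

lemma castV_mulVec (M : Matrix (Fin 2) (Fin 2) ℤ) (α : Z2) :
    castV (M *ᵥ α) = M.map (Int.cast : ℤ → ℝ) *ᵥ castV α := by
  funext i
  simp [castV, mulVec, dotProduct]

lemma norm_castV_round_sub_le (y : Fin 2 → ℝ) : ‖castV (fun i => round (y i)) - y‖ ≤ 1 / 2 :=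
  (pi_norm_le_iff_of_nonneg (by norm_num)).2 fun i => by
    rw [Pi.sub_apply, Real.norm_eq_abs, abs_sub_comm]
    exact abs_sub_round (y i)

lemma Pn_length (ε : ℕ → Fin 2) (n : ℕ) : (Pn ε n).length = n := List.length_ofFn

lemma Pn_succ (ε : ℕ → Fin 2) (n : ℕ) : Pn ε (n + 1) = ε 0 :: Pn (fun m => ε (m + 1)) n :=
  List.ofFn_succ

lemma tendsto_of_uniform_approx {ι E : Type*} [TopologicalSpace E] {g : E → ℝ} {x : E}
    (hg : ContinuousAt g x) {p : ℕ → ι → E} {q : ℕ → ι → ℝ}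
    (hpq : ∀ η : ℝ, 0 < η → ∃ N : ℕ, ∀ n ≥ N, ∀ i, |g (p n i) - q n i| < η)
    {m : ℕ → ℕ} (hm : Tendsto m atTop atTop) {i : ℕ → ι}
    (hpx : Tendsto (fun n => p (m n) (i n)) atTop (𝓝 x)) :
    Tendsto (fun n => q (m n) (i n)) atTop (𝓝 (g x)) := by
  have hdiff : Tendsto (fun n => g (p (m n) (i n)) - q (m n) (i n)) atTop (𝓝 0) := by
    refine Metric.tendsto_atTop.2 fun η hη => ?_
    obtain ⟨N, hN⟩ := hpq η hη
    obtain ⟨K, hK⟩ := tendsto_atTop_atTop.1 hm N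
    exact ⟨K, fun n hn => by simpa [Real.dist_eq] using hN _ (hK n hn) (i n)⟩
  simpa using (hg.tendsto.comp hpx).sub hdiff

lemma tendsto_WR_inv_mulVec {L : ℕ → List (Fin 2)} (hL : Tendsto (fun n => (L n).length) atTop atTop)
    {y : ℕ → Fin 2 → ℝ} {x : Fin 2 → ℝ} {C : ℝ} (hy : ∀ n, ‖y n - WR (L n) *ᵥ x‖ ≤ C) :
    Tendsto (fun n => (WR (L n))⁻¹ *ᵥ y n) atTop (𝓝 x) := by
  have hgeom : Tendsto (fun n => (3 / 4 : ℝ) ^ (L n).length * C) atTop (𝓝 0) := by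
    simpa using ((tendsto_pow_atTop_nhds_zero_of_lt_one (by norm_num) (by norm_num)).comp
      hL).mul_const C
  refine tendsto_iff_norm_sub_tendsto_zero.2 (squeeze_zero (fun n => norm_nonneg _) (fun n => ?_)
    hgeom)
  exact (norm_WR_inv_mulVec_sub_le _ _ _).trans (by gcongr; exact hy n)

/-- If the adaptive directional subdivision scheme converges, with limit functions
`f_ε` for `ε ∈ E_∞`, then the limit functions satisfy the refinement equation
`f_ε = Σ_α a_{ε₁}(α) f_{ε̂}(W_{ε₁}· − α)` where `ε̂ = (ε₂, ε₃, …)`. -/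
theorem stmt9 (a : Fin 2 → Z2 → ℝ) (ha : ∀ η, (Function.support (a η)).Finite)
    (f : (ℕ → Fin 2) → (Fin 2 → ℝ) → ℝ)
    (hf : ∀ ε : ℕ → Fin 2, f ε ≠ 0 ∧ UniformContinuous (f ε) ∧
      ∀ η : ℝ, 0 < η → ∃ N : ℕ, ∀ n ≥ N, ∀ α : Z2,
        |f ε ((WR (Pn ε n))⁻¹.mulVec (castV α)) - Ssub a (Pn ε n) delta α| < η) :
    ∀ ε : ℕ → Fin 2, ∀ x : Fin 2 → ℝ,
      f ε x = ∑' α : Z2, a (ε 0) α *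
        f (fun n => ε (n + 1)) (((Wsel (ε 0)).map (Int.cast : ℤ → ℝ)).mulVec x - castV α) := by
  intro ε x
  set ε' : ℕ → Fin 2 := fun n => ε (n + 1)
  set V := (Wsel (ε 0)).map (Int.cast : ℤ → ℝ)
  set β : ℕ → Z2 := fun n i => round ((WR (Pn ε (n + 1)) *ᵥ x) i)
  have hβ (n : ℕ) : ‖castV (β n) - WR (Pn ε (n + 1)) *ᵥ x‖ ≤ 1 / 2 :=
    norm_castV_round_sub_le _
  have hlhs : Tendsto (fun n => Ssub a (Pn ε (n + 1)) delta (β n)) atTop (𝓝 (f ε x)) :=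
    tendsto_of_uniform_approx (p := fun n α => (WR (Pn ε n))⁻¹ *ᵥ castV α)
      (hf ε).2.1.continuous.continuousAt (hf ε).2.2 (tendsto_add_atTop_nat 1)
      (tendsto_WR_inv_mulVec (by simpa only [Pn_length] using tendsto_add_atTop_nat 1) hβ)
  have hshift (n : ℕ) (α : Z2) :
      castV (β n - WprodL (Pn ε' n) *ᵥ α) - WR (Pn ε' n) *ᵥ (V *ᵥ x - castV α)
        = castV (β n) - WR (Pn ε (n + 1)) *ᵥ x := by
    rw [castV_sub, castV_mulVec, mulVec_sub, mulVec_mulVec, ← WR_cons, ← Pn_succ]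
    exact sub_sub_sub_cancel_right _ _ _
  have hrhs : Tendsto (fun n => ∑ α ∈ (ha (ε 0)).toFinset,
        a (ε 0) α * Ssub a (Pn ε' n) delta (β n - WprodL (Pn ε' n) *ᵥ α)) atTop
      (𝓝 (∑ α ∈ (ha (ε 0)).toFinset, a (ε 0) α * f ε' (V *ᵥ x - castV α))) :=
    tendsto_finsetSum _ fun α _ => .const_mul _ <|
      tendsto_of_uniform_approx (p := fun n α => (WR (Pn ε' n))⁻¹ *ᵥ castV α)
        (hf ε').2.1.continuous.continuousAt (hf ε').2.2 tendsto_id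
        (tendsto_WR_inv_mulVec (by simpa only [Pn_length] using tendsto_id)
          fun n => (hshift n α ▸ hβ n))
  rw [tsum_eq_sum (s := (ha (ε 0)).toFinset) fun α hα => by
    rw [Set.Finite.mem_toFinset, mem_support, not_not] at hα
    rw [hα, zero_mul]]
  refine tendsto_nhds_unique hlhs (hrhs.congr fun n => ?_)
  rw [Pn_succ, Ssub_cons_delta a ha]
end

section
/- Let f : ℝ² → ℝ be continuous and compactly supported with f*c = 0 for every constant sequence c : ℤ² → ℝ (equivalently, Σ_{α∈ℤ²} f(x − α) = 0 for all x ∈ ℝ²). Then there exist continuous compactly supported functions g₁, g₂ : ℝ² → ℝ such that for every bounded c : ℤ² → ℝ, f*c = g₁*(∇₁c) + g₂*(∇₂c). -/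
/-- The semi-discrete convolution `f * c = Σ_α c(α) f(· − α)`. -/
noncomputable def conv (f : (Fin 2 → ℝ) → ℝ) (c : Z2 → ℝ) : (Fin 2 → ℝ) → ℝ :=
  fun x => ∑' α : Z2, c α * f (x - castV α)

/-- Backward difference `∇₁c = c(· − e₁) − c`. -/
def nabla1 (c : Z2 → ℝ) : Z2 → ℝ := fun α => c (α - ![1, 0]) - c α

/-- Backward difference `∇₂c = c(· − e₂) − c`. -/
def nabla2 (c : Z2 → ℝ) : Z2 → ℝ := fun α => c (α - ![0, 1]) - c α

/-! Summation by parts turns `g₁*(∇₁c) + g₂*(∇₂c)` into `(Δ₁g₁ + Δ₂g₂)*c`, where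
`Δᵢg = g(· − eᵢ) − g`, so it suffices to write `f = Δ₁g₁ + Δ₂g₂`. A compactly supported `h` whose
sums along every line `y + ℤv` vanish is `Δ_v` of the compactly supported `−Σ_{n ≥ 0} h(· − n v)`.
Split `f = (f − φ(y₀) F) + φ(y₀) F`, where `F = Σ_m f(· − m e₁)` and `φ` is the hat function, whose
integer translates sum to `1`: the first part has vanishing row sums, and the second has vanishing
column sums because all lattice sums of `f` vanish. -/

open Set Function Metric

section Translates

variable {E F : Type*} [NormedAddCommGroup E] [NormedAddCommGroup F] {h : E → F}
  {ι : Type*} {w : ι → E}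

theorem locallyFinite_support_comp_sub (hw : ∀ C : ℝ, {i | ‖w i‖ ≤ C}.Finite)
    (hh : HasCompactSupport h) :
    LocallyFinite fun i => support fun y => h (y - w i) := by
  obtain ⟨R, -, hR⟩ := hh.exists_pos_le_norm
  intro y
  refine ⟨ball y 1, ball_mem_nhds y one_pos, (hw (‖y‖ + 1 + R)).subset ?_⟩
  rintro i ⟨z, hzh, hzy⟩
  have hzR : ‖z - w i‖ < R := lt_of_not_ge (mt (hR _) hzh)
  have hzy' : ‖z - y‖ < 1 := by simpa [dist_eq_norm] using hzy
  have := norm_sub_norm_le z y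
  have := norm_sub_norm_le (w i) z
  rw [norm_sub_rev] at this
  change ‖w i‖ ≤ _
  linarith

theorem HasCompactSupport.finite_support_comp_sub (hh : HasCompactSupport h)
    (hw : ∀ C : ℝ, {i | ‖w i‖ ≤ C}.Finite) (y : E) :
    (support fun i => h (y - w i)).Finite :=
  (locallyFinite_support_comp_sub hw hh).point_finite y

theorem HasCompactSupport.summable_comp_sub (hh : HasCompactSupport h)
    (hw : ∀ C : ℝ, {i | ‖w i‖ ≤ C}.Finite) (y : E) :
    Summable fun i => h (y - w i) :=
  summable_of_hasFiniteSupport (hh.finite_support_comp_sub hw y)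

theorem continuous_tsum_comp_sub (hw : ∀ C : ℝ, {i | ‖w i‖ ≤ C}.Finite) (hc : Continuous h)
    (hh : HasCompactSupport h) :
    Continuous fun y => ∑' i, h (y - w i) := by
  convert continuous_finsum (fun i => hc.comp (continuous_sub_right (w i)))
    (locallyFinite_support_comp_sub hw hh) using 2 with y
  exact tsum_eq_finsum (hh.finite_support_comp_sub hw y)

theorem tsum_comp_sub_zsmul_sub_zsmul (v y : E) (k : ℤ) :
    ∑' m : ℤ, h (y - k • v - m • v) = ∑' m : ℤ, h (y - m • v) := by
  simpa [sub_sub, ← add_smul] using (Equiv.addLeft k).tsum_eq fun m => h (y - m • v)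

variable [NormedSpace ℝ E] {v : E}

theorem finite_setOf_norm_zsmul_le (hv : v ≠ 0) (C : ℝ) : {m : ℤ | ‖m • v‖ ≤ C}.Finite := by
  refine (isCompact_closedBall (0 : ℤ) (C / ‖v‖)).finite_of_discrete.subset fun m hm => ?_
  rw [mem_closedBall, dist_zero_right, le_div_iff₀ (norm_pos_iff.2 hv)]
  simpa [norm_zsmul ℝ, Int.norm_eq_abs] using hm

theorem finite_setOf_norm_nsmul_le (hv : v ≠ 0) (C : ℝ) : {n : ℕ | ‖n • v‖ ≤ C}.Finite :=
  (finite_setOf_norm_zsmul_le hv C).preimage Nat.cast_injective.injOn |>.subset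
    fun n hn => by simpa [natCast_zsmul] using hn

noncomputable def discretePrimitive (v : E) (h : E → F) (y : E) : F := -∑' n : ℕ, h (y - n • v)

theorem discretePrimitive_sub_sub (hv : v ≠ 0) (hh : HasCompactSupport h) (y : E) :
    discretePrimitive v h (y - v) - discretePrimitive v h y = h y := by
  rw [discretePrimitive, discretePrimitive,
    (hh.summable_comp_sub (finite_setOf_norm_nsmul_le hv) y).tsum_eq_zero_add]
  simp [sub_sub, add_smul, add_comm]

theorem continuous_discretePrimitive (hv : v ≠ 0) (hc : Continuous h) (hh : HasCompactSupport h) :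
    Continuous (discretePrimitive v h) :=
  (continuous_tsum_comp_sub (finite_setOf_norm_nsmul_le hv) hc hh).neg

theorem hasCompactSupport_discretePrimitive (hv : v ≠ 0) (hh : HasCompactSupport h)
    (hsum : ∀ y, ∑' m : ℤ, h (y - m • v) = 0) : HasCompactSupport (discretePrimitive v h) := by
  obtain ⟨R, -, hR⟩ := hh.exists_pos_le_norm
  have hR' : ∀ z, h z ≠ 0 → ‖z‖ < R := fun z hz => lt_of_not_ge (mt (hR z) hz)
  refine HasCompactSupport.intro ((finite_setOf_norm_nsmul_le hv (2 * R)).isCompact_biUnion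
    fun n _ => hh.isCompact.image (continuous_add_const (n • v))) fun y hy => ?_
  by_contra hne
  -- A nonzero tail sum forces a nonzero term on each side of `y` along `ℤ v`, at distance
  -- `(n + k + 1) ‖v‖ ≤ 2R` from each other, which bounds `n`.
  have hsplit := hsum y
  have hfin := hh.finite_support_comp_sub (finite_setOf_norm_zsmul_le hv) y
  rw [tsum_of_nat_of_neg_add_one (f := fun m : ℤ => h (y - m • v))
    (summable_of_hasFiniteSupport (hfin.preimage Nat.cast_injective.injOn))
    (summable_of_hasFiniteSupport (hfin.preimage fun a _ b _ hab => by simpa using hab))] at hsplit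
  simp only [natCast_zsmul, neg_smul, sub_neg_eq_add] at hsplit
  obtain ⟨n, hn⟩ : ∃ n : ℕ, h (y - n • v) ≠ 0 := by
    by_contra! H
    exact hne (by simp [discretePrimitive, H])
  obtain ⟨k, hk⟩ : ∃ k : ℕ, h (y + ((k : ℤ) + 1) • v) ≠ 0 := by
    by_contra! H
    simp only [H, tsum_zero, add_zero] at hsplit
    exact hne (by simp [discretePrimitive, hsplit])
  refine hy (mem_biUnion (x := n) ?_ ⟨y - n • v, subset_tsupport _ hn, sub_add_cancel _ _⟩)
  calc ‖n • v‖ ≤ ‖(n + k + 1) • v‖ := by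
        simp only [RCLike.norm_nsmul ℝ]
        exact nsmul_le_nsmul_left (norm_nonneg v) (by omega)
    _ = ‖(y + ((k : ℤ) + 1) • v) - (y - n • v)‖ := by
        rw [add_sub_sub_cancel, ← natCast_zsmul, ← natCast_zsmul, ← add_smul]
        push_cast
        ring_nf
    _ ≤ ‖y + ((k : ℤ) + 1) • v‖ + ‖y - n • v‖ := norm_sub_le _ _
    _ ≤ 2 * R := by linarith [hR' _ hn, hR' _ hk]

end Translates

section Hat

noncomputable def hat (t : ℝ) : ℝ := max 0 (1 - |t|)

theorem continuous_hat : Continuous hat := by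
  unfold hat
  fun_prop

theorem hat_eq_zero_of_one_le_abs {t : ℝ} (ht : 1 ≤ |t|) : hat t = 0 :=
  max_eq_left (by linarith)

theorem tsum_hat_sub_intCast (t : ℝ) : ∑' m : ℤ, hat (t - m) = 1 := by
  have h0 := Int.floor_le t
  have h1 := Int.lt_floor_add_one t
  rw [tsum_eq_sum (s := {⌊t⌋, ⌊t⌋ + 1}), Finset.sum_pair (by omega)]
  · simp only [hat]
    push_cast
    rw [abs_of_nonneg (by linarith), abs_of_neg (by linarith), max_eq_right (by linarith),
      max_eq_right (by linarith)]
    ring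
  · intro m hm
    simp only [Finset.mem_insert, Finset.mem_singleton, not_or] at hm
    apply hat_eq_zero_of_one_le_abs
    rcases lt_or_gt_of_ne hm.1 with hlt | hgt
    · have : (m : ℝ) + 1 ≤ ⌊t⌋ := by exact_mod_cast hlt
      exact le_abs.2 (Or.inl (by linarith))
    · have : (⌊t⌋ : ℝ) + 2 ≤ m := by exact_mod_cast (by omega : ⌊t⌋ + 2 ≤ m)
      exact le_abs.2 (Or.inr (by linarith))

end Hat

local notation "e₁" => castV ![1, 0]
local notation "e₂" => castV ![0, 1]

section Lattice

theorem castV_add (α β : Z2) : castV (α + β) = castV α + castV β := by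
  ext i
  simp [castV]

theorem castV_eq_zsmul_add_zsmul (α : Z2) : castV α = α 0 • e₁ + α 1 • e₂ := by
  ext i
  fin_cases i <;> simp [castV]

theorem finite_setOf_norm_castV_le (C : ℝ) : {α : Z2 | ‖castV α‖ ≤ C}.Finite :=
  (Set.Finite.pi fun _ => finite_setOf_norm_zsmul_le (one_ne_zero (α := ℝ)) C).subset
    fun α hα i _ => by simpa [castV, zsmul_eq_mul] using
      (norm_le_pi_norm (castV α) i).trans hα

theorem castV_e₁_ne_zero : e₁ ≠ 0 := fun h => by simpa [castV] using congrFun h 0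

theorem castV_e₂_ne_zero : e₂ ≠ 0 := fun h => by simpa [castV] using congrFun h 1

end Lattice

section Rows

noncomputable def rowSum (f : (Fin 2 → ℝ) → ℝ) (y : Fin 2 → ℝ) : ℝ := ∑' m : ℤ, f (y - m • e₁)

noncomputable def rowPart (f : (Fin 2 → ℝ) → ℝ) (y : Fin 2 → ℝ) : ℝ := hat (y 0) * rowSum f y

variable {f : (Fin 2 → ℝ) → ℝ}

theorem rowSum_sub_zsmul (y : Fin 2 → ℝ) (k : ℤ) : rowSum f (y - k • e₁) = rowSum f y :=
  tsum_comp_sub_zsmul_sub_zsmul _ y k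

theorem rowSum_eq_zero {R : ℝ} (hR : ∀ z, R ≤ ‖z‖ → f z = 0) {y : Fin 2 → ℝ} (hy : R ≤ |y 1|) :
    rowSum f y = 0 := by
  have : ∀ m : ℤ, f (y - m • e₁) = 0 := fun m =>
    hR _ (hy.trans (by simpa [castV] using norm_le_pi_norm (y - m • e₁) 1))
  simp only [rowSum, this, tsum_zero]

theorem continuous_rowSum (hc : Continuous f) (hs : HasCompactSupport f) : Continuous (rowSum f) :=
  continuous_tsum_comp_sub (finite_setOf_norm_zsmul_le castV_e₁_ne_zero) hc hs

theorem continuous_rowPart (hc : Continuous f) (hs : HasCompactSupport f) :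
    Continuous (rowPart f) :=
  (continuous_hat.comp (continuous_apply 0)).mul (continuous_rowSum hc hs)

theorem hasCompactSupport_rowPart (hs : HasCompactSupport f) : HasCompactSupport (rowPart f) := by
  obtain ⟨R, -, hR⟩ := hs.exists_pos_le_norm
  refine HasCompactSupport.intro (isCompact_closedBall 0 (max 1 R)) fun y hy => ?_
  rw [mem_closedBall, dist_zero_right,
    pi_norm_le_iff_of_nonneg (zero_le_one.trans (le_max_left _ _))] at hy
  push Not at hy
  rw [Fin.exists_fin_two, Real.norm_eq_abs, Real.norm_eq_abs] at hy
  rcases hy with hi | hi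
  · rw [rowPart, hat_eq_zero_of_one_le_abs ((le_max_left 1 R).trans hi.le), zero_mul]
  · rw [rowPart, rowSum_eq_zero hR ((le_max_right 1 R).trans hi.le), mul_zero]

theorem rowPart_sub_zsmul_e₁ (y : Fin 2 → ℝ) (m : ℤ) :
    rowPart f (y - m • e₁) = hat (y 0 - m) * rowSum f y := by
  rw [rowPart, rowSum_sub_zsmul]
  congr 2
  simp [castV]

theorem tsum_rowPart_sub_zsmul_e₁ (y : Fin 2 → ℝ) :
    ∑' m : ℤ, rowPart f (y - m • e₁) = rowSum f y := by
  simp_rw [rowPart_sub_zsmul_e₁, tsum_mul_right, tsum_hat_sub_intCast, one_mul]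

theorem tsum_rowSum_sub_zsmul_e₂ (hs : HasCompactSupport f) (y : Fin 2 → ℝ) :
    ∑' n : ℤ, rowSum f (y - n • e₂) = ∑' α : Z2, f (y - castV α) := by
  let e : Z2 ≃ ℤ × ℤ := (piFinTwoEquiv fun _ => ℤ).trans (Equiv.prodComm ℤ ℤ)
  have hterm : ∀ p : ℤ × ℤ, f (y - castV (e.symm p)) = f (y - p.1 • e₂ - p.2 • e₁) := fun p => by
    rw [castV_eq_zsmul_add_zsmul, sub_sub, add_comm]
    rfl
  have hsum : Summable fun p : ℤ × ℤ => f (y - p.1 • e₂ - p.2 • e₁) :=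
    (summable_of_hasFiniteSupport (f := fun p => f (y - castV (e.symm p)))
      ((hs.finite_support_comp_sub finite_setOf_norm_castV_le y).preimage
        e.symm.injective.injOn)).congr hterm
  rw [← e.symm.tsum_eq (fun α => f (y - castV α)), tsum_congr hterm, hsum.tsum_prod'
    fun n => hs.summable_comp_sub (finite_setOf_norm_zsmul_le castV_e₁_ne_zero) (y - n • e₂)]
  rfl

theorem tsum_rowPart_sub_zsmul_e₂ (hs : HasCompactSupport f)
    (h0 : ∀ x, ∑' α : Z2, f (x - castV α) = 0) (y : Fin 2 → ℝ) :
    ∑' n : ℤ, rowPart f (y - n • e₂) = 0 := by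
  have hy0 : ∀ n : ℤ, (y - n • e₂) 0 = y 0 := fun n => by simp [castV]
  simp only [rowPart, hy0, tsum_mul_left, tsum_rowSum_sub_zsmul_e₂ hs, h0, mul_zero]

theorem tsum_sub_rowPart_sub_zsmul_e₁ (hs : HasCompactSupport f) (y : Fin 2 → ℝ) :
    ∑' m : ℤ, (f - rowPart f) (y - m • e₁) = 0 := by
  have hw := finite_setOf_norm_zsmul_le castV_e₁_ne_zero
  simp only [Pi.sub_apply]
  rw [(hs.summable_comp_sub hw y).tsum_sub ((hasCompactSupport_rowPart hs).summable_comp_sub hw y),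
    tsum_rowPart_sub_zsmul_e₁]
  exact sub_self _

end Rows

section Conv

variable {g g' : (Fin 2 → ℝ) → ℝ}

theorem HasCompactSupport.summable_mul_comp_sub_castV (hg : HasCompactSupport g) (c : Z2 → ℝ)
    (x : Fin 2 → ℝ) : Summable fun α => c α * g (x - castV α) :=
  summable_of_hasFiniteSupport ((hg.finite_support_comp_sub finite_setOf_norm_castV_le x).subset
    (support_mul_subset_right _ _))

theorem conv_add (hg : HasCompactSupport g) (hg' : HasCompactSupport g') (c : Z2 → ℝ)
    (x : Fin 2 → ℝ) : conv (g + g') c x = conv g c x + conv g' c x := by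
  simp only [conv, Pi.add_apply, mul_add]
  exact (hg.summable_mul_comp_sub_castV c x).tsum_add (hg'.summable_mul_comp_sub_castV c x)

theorem conv_sub_shift (hg : HasCompactSupport g) (c : Z2 → ℝ) (β : Z2) (x : Fin 2 → ℝ) :
    conv g (fun α => c (α - β) - c α) x = conv (fun y => g (y - castV β) - g y) c x := by
  have hshift : ∑' α, c α * g (x - castV α - castV β) = ∑' α, c (α - β) * g (x - castV α) := by
    rw [← (Equiv.addRight β).tsum_eq (fun α => c (α - β) * g (x - castV α))]
    simp [castV_add, sub_sub]
  have hsum : Summable fun α => c α * g (x - castV α - castV β) := by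
    simpa only [sub_right_comm] using hg.summable_mul_comp_sub_castV c (x - castV β)
  simp only [conv, sub_mul, mul_sub]
  rw [(hg.summable_mul_comp_sub_castV _ x).tsum_sub (hg.summable_mul_comp_sub_castV c x),
    hsum.tsum_sub (hg.summable_mul_comp_sub_castV c x), hshift]

end Conv

/-- Let `f` be continuous and compactly supported with `Σ_α f(x − α) = 0` for all `x`
(equivalently `f*c = 0` for constant `c`). Then there are continuous compactly
supported `g₁, g₂` with `f*c = g₁*(∇₁c) + g₂*(∇₂c)` for every bounded `c`. -/
theorem stmt13 (f : (Fin 2 → ℝ) → ℝ) (hfc : Continuous f) (hfs : HasCompactSupport f)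
    (h0 : ∀ x : Fin 2 → ℝ, ∑' α : Z2, f (x - castV α) = 0) :
    ∃ g1 g2 : (Fin 2 → ℝ) → ℝ,
      Continuous g1 ∧ HasCompactSupport g1 ∧ Continuous g2 ∧ HasCompactSupport g2 ∧
      ∀ c : Z2 → ℝ, Bdd c → ∀ x : Fin 2 → ℝ,
        conv f c x = conv g1 (nabla1 c) x + conv g2 (nabla2 c) x := by
  set h₂ := rowPart f
  set h₁ := f - h₂
  have hc₂ : Continuous h₂ := continuous_rowPart hfc hfs
  have hs₂ : HasCompactSupport h₂ := hasCompactSupport_rowPart hfs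
  have hs₁ : HasCompactSupport h₁ := hfs.sub hs₂
  have hg₁ := hasCompactSupport_discretePrimitive castV_e₁_ne_zero hs₁
    (tsum_sub_rowPart_sub_zsmul_e₁ hfs)
  have hg₂ := hasCompactSupport_discretePrimitive castV_e₂_ne_zero hs₂
    (tsum_rowPart_sub_zsmul_e₂ hfs h0)
  refine ⟨_, _, continuous_discretePrimitive castV_e₁_ne_zero (hfc.sub hc₂) hs₁, hg₁,
    continuous_discretePrimitive castV_e₂_ne_zero hc₂ hs₂, hg₂, fun c _ x => ?_⟩
  unfold nabla1 nabla2
  rw [conv_sub_shift hg₁, conv_sub_shift hg₂,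
    funext (discretePrimitive_sub_sub castV_e₁_ne_zero hs₁),
    funext (discretePrimitive_sub_sub castV_e₂_ne_zero hs₂), ← conv_add hs₁ hs₂, sub_add_cancel]
end
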